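/- Let σ : ℝ → ℝ be equal on all of ℝ to its Taylor series at 0, σ(u) = ∑_{t≥0} a_t u^t, and set f(u) := ∑_{t≥0} |a_t| u^t. Let B := {x ∈ ℓ² : ∑_{t≥0} |a_t| ‖x‖^{2t} < ∞}. Then there exist maps φ, ψ : B → H into a separable real Hilbert space H (one may take H = ℓ² over the countable index set ⋃_{t≥0} ℕ^t) such that for all x, x' ∈ B and all w ∈ B: ⟨φ(x), φ(x')⟩_H = f(⟨x, x'⟩_{ℓ²}), ⟨ψ(x), ψ(x')⟩_H = f(⟨x, x'⟩_{ℓ²}), and ⟨φ(x), ψ(w)⟩_H = σ(⟨x, w⟩_{ℓ²}). -/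

import Mathlib

open scoped BigOperators

/-
Feature maps built from tensor powers: the coordinates of `x ^⊗ t` indexed by `k : Fin t → ℕ`
are `∏ i, x (k i)`, and `⟪x ^⊗ t, y ^⊗ t⟫ = ⟪x, y⟫ ^ t`. Stacking the tensor powers with weights
`c t` and `d t` gives vectors whose inner product is `∑ t, c t * d t * ⟪x, y⟫ ^ t`; the weights
`√|a t|` and `a t / √|a t|` have products `|a t|` and `a t`, which produces `f` and `σ`.
All sums converge absolutely because `∑ n, |x n * y n| ≤ ‖x‖ * ‖y‖` and
`(‖x‖ * ‖y‖) ^ t ≤ ‖x‖ ^ (2 * t) + ‖y‖ ^ (2 * t)`.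
-/

/-- The real Hilbert space `ℓ²` of square-summable sequences indexed by `ℕ`. -/
noncomputable abbrev ellTwo : Type := lp (fun _ : ℕ => ℝ) 2

/-- The separable real Hilbert space `ℓ²` over the countable index set `⋃_{t≥0} ℕ^t`
(realized as `Σ t : ℕ, (Fin t → ℕ)`). -/
noncomputable abbrev featSpace : Type := lp (fun _ : (Σ t : ℕ, Fin t → ℕ) => ℝ) 2

open scoped RealInnerProductSpace

variable {ι : Type*}

theorem hasSum_prod_fin_pi (t : ℕ) {g : ι → ℝ} (hg : Summable fun n => |g n|) :
    HasSum (fun k : Fin t → ι => ∏ i, g (k i)) ((∑' n, g n) ^ t) := by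
  induction t generalizing g with
  | zero => simp
  | succ t ih =>
    have hprod_norm : Summable fun k : Fin t → ι => ‖∏ i, g (k i)‖ := by
      simpa only [Real.norm_eq_abs, Finset.abs_prod] using
        (ih (g := fun n => |g n|) (by simpa only [abs_abs] using hg)).summable
    have hmul := HasSum.mul (f := g) (g := fun k : Fin t → ι => ∏ i, g (k i))
      hg.of_abs.hasSum (ih hg) (Summable.mul_norm (R := ℝ) hg hprod_norm).of_norm
    rw [pow_succ', ← (Fin.consEquiv fun _ => ι).hasSum_iff]
    simpa [Function.comp_def, Fin.prod_univ_succ] using hmul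

theorem hasSum_sigma_mul_prod_fin_pi (b : ℕ → ℝ) {g : ι → ℝ} (hg : Summable fun n => |g n|)
    (hb : Summable fun t => |b t| * (∑' n, |g n|) ^ t) :
    HasSum (fun p : Σ t, Fin t → ι => b p.1 * ∏ i, g (p.2 i)) (∑' t, b t * (∑' n, g n) ^ t) := by
  have hfiber (t : ℕ) : HasSum (fun k : Fin t → ι => b t * ∏ i, g (k i)) (b t * (∑' n, g n) ^ t) :=
    (hasSum_prod_fin_pi t hg).mul_left (b t)
  have habs_fiber (t : ℕ) :
      HasSum (fun k : Fin t → ι => |b t * ∏ i, g (k i)|) (|b t| * (∑' n, |g n|) ^ t) := by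
    simpa only [abs_mul, Finset.abs_prod] using
      (hasSum_prod_fin_pi t (g := fun n => |g n|) (by simpa only [abs_abs] using hg)).mul_left |b t|
  have hsum : Summable fun p : Σ t, Fin t → ι => b p.1 * ∏ i, g (p.2 i) :=
    .of_abs <| (summable_sigma_of_nonneg fun _ => abs_nonneg _).2
      ⟨fun t => (habs_fiber t).summable, hb.congr fun t => (habs_fiber t).tsum_eq.symm⟩
  rw [(hsum.hasSum.sigma hfiber).tsum_eq]
  exact hsum.hasSum

namespace lp

theorem real_inner_eq_tsum_mul (x y : lp (fun _ : ι => ℝ) 2) : ⟪x, y⟫ = ∑' n, x n * y n := by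
  simp [lp.inner_eq_tsum, mul_comm]

theorem real_tsum_abs_mul_le_mul_norm (x y : lp (fun _ : ι => ℝ) 2) :
    (Summable fun n => |x n * y n|) ∧ ∑' n, |x n * y n| ≤ ‖x‖ * ‖y‖ := by
  simpa [abs_mul] using lp.tsum_mul_le_mul_norm (by simpa using Real.HolderConjugate.two_two) x y

end lp

def powerFeature (c : ℕ → ℝ) (x : ι → ℝ) (p : Σ t, Fin t → ι) : ℝ := c p.1 * ∏ i, x (p.2 i)

theorem hasSum_powerFeature_mul {c d : ℕ → ℝ} {x y : lp (fun _ : ι => ℝ) 2}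
    (h : Summable fun t => |c t * d t| * (‖x‖ * ‖y‖) ^ t) :
    HasSum (fun p => powerFeature c x p * powerFeature d y p) (∑' t, c t * d t * ⟪x, y⟫ ^ t) := by
  obtain ⟨hxy, hxy_le⟩ := lp.real_tsum_abs_mul_le_mul_norm x y
  have hb : Summable fun t => |c t * d t| * (∑' n, |x n * y n|) ^ t :=
    h.of_nonneg_of_le (fun t => by positivity) fun t =>
      mul_le_mul_of_nonneg_left (pow_le_pow_left₀ (tsum_nonneg fun _ => abs_nonneg _) hxy_le t)
        (abs_nonneg _)
  rw [lp.real_inner_eq_tsum_mul]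
  convert hasSum_sigma_mul_prod_fin_pi (fun t => c t * d t) hxy hb using 2 with p
  simp only [powerFeature, Finset.prod_mul_distrib]
  ring

theorem memℓp_powerFeature {c : ℕ → ℝ} {x : lp (fun _ : ι => ℝ) 2}
    (h : Summable fun t => |c t * c t| * (‖x‖ * ‖x‖) ^ t) : Memℓp (powerFeature c x) 2 :=
  memℓp_gen <| (hasSum_powerFeature_mul h).summable.congr fun p => by simp [sq]

theorem real_inner_powerFeature {c d : ℕ → ℝ} {x y : lp (fun _ : ι => ℝ) 2}
    (hx : Memℓp (powerFeature c x) 2) (hy : Memℓp (powerFeature d y) 2)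
    (h : Summable fun t => |c t * d t| * (‖x‖ * ‖y‖) ^ t) :
    ⟪(⟨_, hx⟩ : lp (fun _ : (Σ t, Fin t → ι) => ℝ) 2), ⟨_, hy⟩⟫ = ∑' t, c t * d t * ⟪x, y⟫ ^ t := by
  rw [lp.real_inner_eq_tsum_mul]
  exact (hasSum_powerFeature_mul h).tsum_eq

theorem summable_abs_mul_pow_mul {a : ℕ → ℝ} {r s : ℝ} (hr₀ : 0 ≤ r) (hs₀ : 0 ≤ s)
    (hr : Summable fun t => |a t| * r ^ (2 * t)) (hs : Summable fun t => |a t| * s ^ (2 * t)) :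
    Summable fun t => |a t| * (r * s) ^ t := by
  refine (hr.add hs).of_nonneg_of_le (fun t => by positivity) fun t => ?_
  have : (r * s) ^ t ≤ r ^ (2 * t) + s ^ (2 * t) := by
    rw [mul_pow, pow_mul', pow_mul']
    nlinarith [sq_nonneg (r ^ t - s ^ t), pow_nonneg hr₀ t, pow_nonneg hs₀ t]
  rw [← mul_add]
  exact mul_le_mul_of_nonneg_left this (abs_nonneg _)

theorem Real.sqrt_abs_mul_div_sqrt_abs (a : ℝ) : √|a| * (a / √|a|) = a := by
  rcases eq_or_ne a 0 with rfl | ha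
  · simp
  · exact mul_div_cancel₀ a (by positivity)

theorem Real.div_sqrt_abs_mul_self (a : ℝ) : a / √|a| * (a / √|a|) = |a| := by
  rw [div_mul_div_comm, Real.mul_self_sqrt (abs_nonneg a), ← abs_mul_abs_self, mul_self_div_self]

/-- Let `σ : ℝ → ℝ` equal its Taylor series at `0` on all of `ℝ`,
`σ(u) = ∑_t a_t u^t`, and set `f(u) := ∑_t |a_t| u^t`. With
`B := {x ∈ ℓ² : ∑_t |a_t| ‖x‖^{2t} < ∞}`, there exist maps `φ, ψ : B → H` into the
separable Hilbert space `H = ℓ²(⋃_t ℕ^t)` such that for all `x, x', w ∈ B`: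
`⟨φ(x), φ(x')⟩ = f(⟨x,x'⟩)`, `⟨ψ(x), ψ(x')⟩ = f(⟨x,x'⟩)` and `⟨φ(x), ψ(w)⟩ = σ(⟨x,w⟩)`. -/
theorem stmt_9 (σ : ℝ → ℝ) (a : ℕ → ℝ)
    (hσ : ∀ u : ℝ, HasSum (fun t : ℕ => a t * u ^ t) (σ u))
    (f : ℝ → ℝ) (hf : f = fun u : ℝ => ∑' t : ℕ, |a t| * u ^ t)
    (B : Set ellTwo) (hB : B = {x : ellTwo | Summable fun t : ℕ => |a t| * ‖x‖ ^ (2 * t)}) :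
    ∃ φ ψ : B → featSpace,
      (∀ x x' : B, (inner ℝ (φ x) (φ x') : ℝ) = f ((inner ℝ (x : ellTwo) (x' : ellTwo) : ℝ))) ∧
      (∀ x x' : B, (inner ℝ (ψ x) (ψ x') : ℝ) = f ((inner ℝ (x : ellTwo) (x' : ellTwo) : ℝ))) ∧
      (∀ x w : B, (inner ℝ (φ x) (ψ w) : ℝ) = σ ((inner ℝ (x : ellTwo) (w : ellTwo) : ℝ))) := by
  subst hf hB
  set c : ℕ → ℝ := fun t => √|a t|
  set s : ℕ → ℝ := fun t => a t / √|a t|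
  have hcc (t : ℕ) : c t * c t = |a t| := Real.mul_self_sqrt (abs_nonneg _)
  have hcs (t : ℕ) : c t * s t = a t := Real.sqrt_abs_mul_div_sqrt_abs _
  have hss (t : ℕ) : s t * s t = |a t| := Real.div_sqrt_abs_mul_self _
  have hB_norm (x y : {x : ellTwo | Summable fun t : ℕ => |a t| * ‖x‖ ^ (2 * t)}) :
      Summable fun t => |a t| * (‖(x : ellTwo)‖ * ‖(y : ellTwo)‖) ^ t :=
    summable_abs_mul_pow_mul (norm_nonneg _) (norm_nonneg _) x.2 y.2
  have hφ (x : _) := memℓp_powerFeature (c := c) (by simpa only [hcc, abs_abs] using hB_norm x x)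
  have hψ (x : _) := memℓp_powerFeature (c := s) (by simpa only [hss, abs_abs] using hB_norm x x)
  refine ⟨fun x => ⟨powerFeature c x, hφ x⟩, fun x => ⟨powerFeature s x, hψ x⟩,
    fun x y => ?_, fun x y => ?_, fun x y => ?_⟩
  · rw [real_inner_powerFeature _ _ (by simpa only [hcc, abs_abs] using hB_norm x y)]
    simp only [hcc]
  · rw [real_inner_powerFeature _ _ (by simpa only [hss, abs_abs] using hB_norm x y)]
    simp only [hss]
  · rw [real_inner_powerFeature _ _ (by simpa only [hcs] using hB_norm x y)]
    simp only [hcs, (hσ _).tsum_eq]
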